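/- Let 0 < q < 1, μ₂ > μ₁ > 0 reals and j > i ≥ 0 integers. Then det( 1/(q^{μ₁};q)ᵢ, 1/(q^{μ₂};q)ᵢ ; 1/(q^{μ₁};q)ⱼ, 1/(q^{μ₂};q)ⱼ ) is strictly negative; i.e. the kernel 1/(q^μ;q)ₙ is strictly reverse-rule of order 2. -/

import Mathlib

/-- The q-Pochhammer symbol `(a; q)_n = ∏_{k=0}^{n-1} (1 - a q^k)`. -/
def qPoch (a q : ℝ) (n : ℕ) : ℝ := ∏ k ∈ Finset.range n, (1 - a * q ^ k)

/-! For `0 < q ≤ 1` and `0 ≤ b < a < 1` every factor of `(a;q)_n` is positive and strictly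
smaller than the corresponding factor of `(b;q)_n`. Splitting `(·;q)_j = (·;q)_i · ∏_{i ≤ k < j}`
therefore gives `(b;q)_i (a;q)_j < (a;q)_i (b;q)_j`, and inverting these positive numbers is
the sign of the determinant for `a = q^μ₁`, `b = q^μ₂`. -/

section qPoch

variable {a b q : ℝ}

lemma one_sub_mul_pow_pos (hq0 : 0 ≤ q) (hq1 : q ≤ 1) (ha0 : 0 ≤ a) (ha1 : a < 1) (k : ℕ) :
    0 < 1 - a * q ^ k := by
  have : a * q ^ k ≤ a := mul_le_of_le_one_right ha0 (pow_le_one₀ hq0 hq1)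
  linarith

lemma qPoch_pos (hq0 : 0 ≤ q) (hq1 : q ≤ 1) (ha0 : 0 ≤ a) (ha1 : a < 1) (n : ℕ) :
    0 < qPoch a q n :=
  Finset.prod_pos fun k _ => one_sub_mul_pow_pos hq0 hq1 ha0 ha1 k

lemma qPoch_mul_prod_Ico {i j : ℕ} (hij : i ≤ j) :
    qPoch a q i * ∏ k ∈ Finset.Ico i j, (1 - a * q ^ k) = qPoch a q j :=
  Finset.prod_range_mul_prod_Ico _ hij

lemma prod_Ico_one_sub_mul_pow_lt (hq0 : 0 < q) (hq1 : q ≤ 1) (hb0 : 0 ≤ b) (hba : b < a)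
    (ha1 : a < 1) {i j : ℕ} (hij : i < j) :
    ∏ k ∈ Finset.Ico i j, (1 - a * q ^ k) < ∏ k ∈ Finset.Ico i j, (1 - b * q ^ k) := by
  apply Finset.prod_lt_prod_of_nonempty
  · exact fun k _ => one_sub_mul_pow_pos hq0.le hq1 (hb0.trans hba.le) ha1 k
  · intro k _
    have : b * q ^ k < a * q ^ k := mul_lt_mul_of_pos_right hba (pow_pos hq0 k)
    linarith
  · exact Finset.nonempty_Ico.mpr hij

theorem qPoch_mul_qPoch_lt (hq0 : 0 < q) (hq1 : q ≤ 1) (hb0 : 0 ≤ b) (hba : b < a)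
    (ha1 : a < 1) {i j : ℕ} (hij : i < j) :
    qPoch b q i * qPoch a q j < qPoch a q i * qPoch b q j := by
  have hprod : 0 < qPoch a q i * qPoch b q i :=
    mul_pos (qPoch_pos hq0.le hq1 (hb0.trans hba.le) ha1 i)
      (qPoch_pos hq0.le hq1 hb0 (hba.trans ha1) i)
  rw [← qPoch_mul_prod_Ico (a := a) hij.le, ← qPoch_mul_prod_Ico (a := b) hij.le]
  calc qPoch b q i * (qPoch a q i * ∏ k ∈ Finset.Ico i j, (1 - a * q ^ k))
      = (qPoch a q i * qPoch b q i) * ∏ k ∈ Finset.Ico i j, (1 - a * q ^ k) := by ring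
    _ < (qPoch a q i * qPoch b q i) * ∏ k ∈ Finset.Ico i j, (1 - b * q ^ k) :=
        mul_lt_mul_of_pos_left (prod_Ico_one_sub_mul_pow_lt hq0 hq1 hb0 hba ha1 hij) hprod
    _ = qPoch a q i * (qPoch b q i * ∏ k ∈ Finset.Ico i j, (1 - b * q ^ k)) := by ring

end qPoch

theorem inv_qPoch_kernel_det2_neg (q : ℝ) (hq0 : 0 < q) (hq1 : q < 1)
    (μ₁ μ₂ : ℝ) (hμ0 : 0 < μ₁) (hμ : μ₁ < μ₂) (i j : ℕ) (hij : i < j) :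
    (qPoch (q ^ μ₁) q i)⁻¹ * (qPoch (q ^ μ₂) q j)⁻¹
      - (qPoch (q ^ μ₂) q i)⁻¹ * (qPoch (q ^ μ₁) q j)⁻¹ < 0 := by
  have hb0 : 0 ≤ q ^ μ₂ := Real.rpow_nonneg hq0.le μ₂
  have hba : q ^ μ₂ < q ^ μ₁ := Real.rpow_lt_rpow_of_exponent_gt hq0 hq1 hμ
  have ha1 : q ^ μ₁ < 1 := Real.rpow_lt_one hq0.le hq1 hμ0
  have hpos : 0 < qPoch (q ^ μ₂) q i * qPoch (q ^ μ₁) q j :=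
    mul_pos (qPoch_pos hq0.le hq1.le hb0 (hba.trans ha1) i)
      (qPoch_pos hq0.le hq1.le (hb0.trans hba.le) ha1 j)
  rw [← mul_inv, ← mul_inv, sub_neg]
  exact inv_strictAnti₀ hpos (qPoch_mul_qPoch_lt hq0 hq1.le hb0 hba ha1 hij)
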